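/- arXiv:math/0007040 — 3 statements merged into one kernel-verified Lean document; each statement's English description precedes it below -/
import Mathlib

section
/- Let W be a finite increasing filtration of a finite-dimensional vector space V. A grading of W is a semisimple endomorphism Y of V with integer eigenvalues such that W_k = ⊕_{j ≤ k} E_j(Y), where E_j(Y) is the j-eigenspace. Then the group exp(Lie_{-1}), where Lie_{-1} = { α ∈ End(V) : α(W_k) ⊆ W_{k-1} ∀k }, acts simply transitively (by conjugation) on the set of all gradings of W. -/
open Module

/-- `Lie_{-1}`: the endomorphisms lowering the filtration `W` by `1`. -/
def LieNegOne {V : Type*} [AddCommGroup V] [Module ℂ V] (W : ℤ → Submodule ℂ V) :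
    Set (Module.End ℂ V) :=
  {α | ∀ k : ℤ, ∀ x ∈ W k, α x ∈ W (k - 1)}

/-- `Y` is a grading of the filtration `W`: `Y` is semisimple with integer eigenvalues and
`W_k = ⊕_{j ≤ k} E_j(Y)`. -/
def IsGrading {V : Type*} [AddCommGroup V] [Module ℂ V] (W : ℤ → Submodule ℂ V)
    (Y : Module.End ℂ V) : Prop :=
  ∀ k : ℤ, W k = ⨆ j : ℤ, ⨆ _ : j ≤ k, Module.End.eigenspace Y (j : ℂ)

/-- The exponential of a nilpotent endomorphism of a finite-dimensional space
(the series truncated at `finrank + 1`, which is the full exponential for nilpotent arguments). -/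
noncomputable def expNil {V : Type*} [AddCommGroup V] [Module ℂ V] (α : Module.End ℂ V) :
    Module.End ℂ V :=
  ∑ i ∈ Finset.range (Module.finrank ℂ V + 1), ((i.factorial : ℂ))⁻¹ • α ^ i

/-! ### Auxiliary material -/

open Polynomial

section Aux

variable {V : Type*} [AddCommGroup V] [Module ℂ V]

/-- The submodule of endomorphisms lowering the filtration `W` by `m`. -/
def LSub (W : ℤ → Submodule ℂ V) (m : ℕ) : Submodule ℂ (Module.End ℂ V) where
  carrier := {α | ∀ k : ℤ, ∀ x ∈ W k, α x ∈ W (k - m)}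
  add_mem' := fun ha hb k x hx => by
    simpa using (W (k - _)).add_mem (ha k x hx) (hb k x hx)
  zero_mem' := fun k x hx => by simp [(W (k - _)).zero_mem]
  smul_mem' := fun c α ha k x hx => by
    simpa using (W (k - _)).smul_mem c (ha k x hx)

variable {W : ℤ → Submodule ℂ V}

theorem mem_lieNegOne_iff {α : Module.End ℂ V} : α ∈ LieNegOne W ↔ α ∈ LSub W 1 := by
  constructor <;> intro h k x hx <;> simpa using h k x hx

theorem lsub_mono (hmono : Monotone W) {m m' : ℕ} (h : m ≤ m') :
    LSub W m' ≤ LSub W m := fun α hα k x hx =>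
  hmono (by omega : k - (m' : ℤ) ≤ k - m) (hα k x hx)

theorem lsub_mul {m m' : ℕ} {α β : Module.End ℂ V}
    (hα : α ∈ LSub W m) (hβ : β ∈ LSub W m') : α * β ∈ LSub W (m + m') := by
  intro k x hx
  have := hα (k - m') (β x) (hβ k x hx)
  have he : k - (m' : ℤ) - m = k - ((m : ℤ) + m') := by ring
  rw [he] at this
  simpa using this

theorem pow_mem_lsub {α : Module.End ℂ V} (hα : α ∈ LSub W 1) :
    ∀ i : ℕ, 1 ≤ i → α ^ i ∈ LSub W i := by
  intro i hi
  induction i with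
  | zero => omega
  | succ n ih =>
    rcases Nat.eq_or_lt_of_le hi with h | h
    · simpa [← h] using hα
    · have := lsub_mul (ih (by omega)) hα
      rw [pow_succ]
      exact this

theorem lsub_eq_zero {a b : ℤ} (hbot : ∀ k ≤ a, W k = ⊥) (htopb : W b = ⊤)
    {M : ℕ} (hM : b - a ≤ (M : ℤ)) {α : Module.End ℂ V} (hα : α ∈ LSub W M) : α = 0 := by
  ext x
  have hx : x ∈ W b := htopb ▸ Submodule.mem_top
  have := hα b x hx
  rw [hbot (b - M) (by omega)] at this
  simpa using this

/-! ### Truncated exponential via polynomials -/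

/-- truncated exponential polynomial -/
noncomputable def expPoly (n : ℕ) : ℂ[X] :=
  ∑ i ∈ Finset.range (n + 1), Polynomial.C ((i.factorial : ℂ))⁻¹ * X ^ i

/-- truncated exponential polynomial at `-X` -/
noncomputable def negExpPoly (n : ℕ) : ℂ[X] :=
  ∑ i ∈ Finset.range (n + 1), Polynomial.C ((-1) ^ i * ((i.factorial : ℂ))⁻¹) * X ^ i

theorem expNil_eq_aeval (α : Module.End ℂ V) :
    expNil α = aeval α (expPoly (Module.finrank ℂ V)) := by
  rw [expNil, expPoly, map_sum]
  refine Finset.sum_congr rfl fun i _ => ?_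
  rw [map_mul, aeval_C, map_pow, aeval_X, Algebra.smul_def]

theorem expNil_neg_eq_aeval (α : Module.End ℂ V) :
    expNil (-α) = aeval α (negExpPoly (Module.finrank ℂ V)) := by
  rw [expNil, negExpPoly, map_sum]
  refine Finset.sum_congr rfl fun i _ => ?_
  have h1 : (-1 : Module.End ℂ V) = algebraMap ℂ (Module.End ℂ V) (-1) := by simp
  rw [map_mul, aeval_C, map_pow, aeval_X, neg_pow, h1, ← map_pow, Algebra.smul_def,
    ← mul_assoc, ← map_mul, mul_comm ((i.factorial : ℂ))⁻¹ ((-1 : ℂ) ^ i)]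

theorem coeff_expPoly {n d : ℕ} (h : d ≤ n) :
    (expPoly n).coeff d = ((d.factorial : ℂ))⁻¹ := by
  rw [expPoly, finset_sum_coeff]
  simp only [coeff_C_mul, coeff_X_pow, mul_ite, mul_one, mul_zero]
  rw [Finset.sum_ite_eq (Finset.range (n + 1)) d fun i => ((i.factorial : ℂ))⁻¹]
  simp [Nat.lt_succ_iff, h]

theorem coeff_negExpPoly {n d : ℕ} (h : d ≤ n) :
    (negExpPoly n).coeff d = (-1) ^ d * ((d.factorial : ℂ))⁻¹ := by
  rw [negExpPoly, finset_sum_coeff]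
  simp only [coeff_C_mul, coeff_X_pow, mul_ite, mul_one, mul_zero]
  rw [Finset.sum_ite_eq (Finset.range (n + 1)) d fun i => (-1 : ℂ) ^ i * ((i.factorial : ℂ))⁻¹]
  simp [Nat.lt_succ_iff, h]

theorem sum_antidiag_exp (m : ℕ) :
    ∑ p ∈ Finset.HasAntidiagonal.antidiagonal m,
      ((p.1.factorial : ℂ))⁻¹ * ((-1) ^ p.2 * ((p.2.factorial : ℂ))⁻¹) =
      if m = 0 then 1 else 0 := by
  have h := congrArg (PowerSeries.coeff m) (PowerSeries.exp_mul_exp_neg_eq_one (A := ℂ))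
  rw [PowerSeries.coeff_mul] at h
  have h1 : ∀ p ∈ Finset.HasAntidiagonal.antidiagonal m,
      (PowerSeries.coeff p.1) (PowerSeries.exp ℂ) *
        (PowerSeries.coeff p.2) (PowerSeries.evalNegHom (PowerSeries.exp ℂ)) =
      ((p.1.factorial : ℂ))⁻¹ * ((-1) ^ p.2 * ((p.2.factorial : ℂ))⁻¹) := by
    intro p _
    rw [PowerSeries.evalNegHom, PowerSeries.coeff_rescale, PowerSeries.coeff_exp,
      PowerSeries.coeff_exp]
    push_cast
    ring
  rw [Finset.sum_congr rfl h1] at h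
  rw [h]
  by_cases hm : m = 0 <;> simp [hm, PowerSeries.coeff_one]

theorem X_pow_dvd_exp_mul_negExp (n : ℕ) :
    (X : ℂ[X]) ^ (n + 1) ∣ expPoly n * negExpPoly n - 1 := by
  rw [Polynomial.X_pow_dvd_iff]
  intro d hd
  rw [coeff_sub, Polynomial.coeff_mul]
  have h1 : ∀ p ∈ Finset.HasAntidiagonal.antidiagonal d,
      (expPoly n).coeff p.1 * (negExpPoly n).coeff p.2 =
      ((p.1.factorial : ℂ))⁻¹ * ((-1) ^ p.2 * ((p.2.factorial : ℂ))⁻¹) := by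
    intro p hp
    have hp' := (Finset.HasAntidiagonal.mem_antidiagonal).mp hp
    rw [coeff_expPoly (by omega), coeff_negExpPoly (by omega)]
  rw [Finset.sum_congr rfl h1, sum_antidiag_exp]
  by_cases hd0 : d = 0 <;> simp [hd0, Polynomial.coeff_one]

theorem expNil_mul_expNil_neg {α : Module.End ℂ V}
    (h : α ^ (Module.finrank ℂ V + 1) = 0) : expNil α * expNil (-α) = 1 := by
  obtain ⟨q, hq⟩ := X_pow_dvd_exp_mul_negExp (Module.finrank ℂ V)
  have := congrArg (aeval α) hq
  rw [map_sub, map_mul, map_mul, map_pow, aeval_X, map_one, h, zero_mul] at this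
  rw [expNil_eq_aeval, expNil_neg_eq_aeval, ← sub_eq_zero]
  exact this

theorem expNil_zero [FiniteDimensional ℂ V] : expNil (0 : Module.End ℂ V) = 1 := by
  rw [expNil, Finset.sum_eq_single 0 (fun i _ hi => by simp [zero_pow hi]) (by simp)]
  simp

variable [FiniteDimensional ℂ V]

theorem lsub_pow_eq_zero {a b : ℤ} (hbot : ∀ k ≤ a, W k = ⊥) (htopb : W b = ⊤)
    {α : Module.End ℂ V} (hα : α ∈ LSub W 1) : α ^ (Module.finrank ℂ V + 1) = 0 := by
  set M : ℕ := (b - a).toNat + 1 with hMdef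
  have hnil : IsNilpotent α := by
    refine ⟨M, lsub_eq_zero hbot htopb ?_ (pow_mem_lsub hα M (by omega))⟩
    have := Int.self_le_toNat (b - a)
    omega
  have hc := hnil.charpoly_eq_X_pow_finrank
  have := α.aeval_self_charpoly
  rw [hc, map_pow, aeval_X] at this
  rw [pow_succ, this, zero_mul]

/-- difference of powers lemma -/
theorem pow_diff_mem (hmono : Monotone W) {α δ : Module.End ℂ V}
    (hα : α ∈ LSub W 1) {m : ℕ} (hm : 1 ≤ m) (hδ : δ ∈ LSub W m) :
    ∀ i : ℕ, (α + δ) ^ (i + 1) - α ^ (i + 1) ∈ LSub W (m + i) := by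
  intro i
  induction i with
  | zero => simpa using hδ
  | succ n ih =>
    have hsum : α + δ ∈ LSub W 1 := (LSub W 1).add_mem hα (lsub_mono hmono hm hδ)
    have h1 : (α + δ) * ((α + δ) ^ (n + 1) - α ^ (n + 1)) ∈ LSub W (1 + (m + n)) :=
      lsub_mul hsum ih
    have h2 : δ * α ^ (n + 1) ∈ LSub W (m + (n + 1)) :=
      lsub_mul hδ (pow_mem_lsub hα (n + 1) (by omega))
    have he : (α + δ) ^ (n + 1 + 1) - α ^ (n + 1 + 1) =
        (α + δ) * ((α + δ) ^ (n + 1) - α ^ (n + 1)) + δ * α ^ (n + 1) := by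
      symm
      rw [mul_sub, add_mul α δ (α ^ (n + 1)), ← pow_succ' (α + δ), ← pow_succ' α]
      abel
    rw [he]
    have h1' : (α + δ) * ((α + δ) ^ (n + 1) - α ^ (n + 1)) ∈ LSub W (m + (n + 1)) := by
      have : 1 + (m + n) = m + (n + 1) := by omega
      rwa [this] at h1
    exact (LSub W _).add_mem h1' h2

theorem expNil_approx (hmono : Monotone W) {α δ : Module.End ℂ V}
    (hα : α ∈ LSub W 1) {m : ℕ} (hm : 1 ≤ m) (hδ : δ ∈ LSub W m) :
    expNil (α + δ) - expNil α - δ ∈ LSub W (m + 1) := by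
  by_cases h0 : Module.finrank ℂ V = 0
  · have : Subsingleton V := by
      rw [← Module.finrank_zero_iff (R := ℂ)]; omega
    have : Subsingleton (Module.End ℂ V) := inferInstance
    rw [Subsingleton.elim (expNil (α + δ) - expNil α - δ) 0]
    exact (LSub W (m + 1)).zero_mem
  obtain ⟨n, hn⟩ : ∃ n, Module.finrank ℂ V = n + 1 := ⟨Module.finrank ℂ V - 1, by omega⟩
  have hdiff : expNil (α + δ) - expNil α =
      ∑ i ∈ Finset.range (Module.finrank ℂ V + 1),
        ((i.factorial : ℂ))⁻¹ • ((α + δ) ^ i - α ^ i) := by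
    rw [expNil, expNil, ← Finset.sum_sub_distrib]
    exact Finset.sum_congr rfl fun i _ => (smul_sub _ _ _).symm
  rw [hdiff, hn, Finset.sum_range_succ' _ (n + 1), Finset.sum_range_succ' _ n]
  have e0 : ((Nat.factorial 0 : ℂ))⁻¹ • ((α + δ) ^ 0 - α ^ 0) = 0 := by simp
  have e1 : (((0 + 1 : ℕ).factorial : ℂ))⁻¹ • ((α + δ) ^ (0 + 1) - α ^ (0 + 1)) = δ := by simp
  rw [e0, e1, add_zero, add_sub_cancel_right]
  refine Submodule.sum_mem _ fun i _ => Submodule.smul_mem _ _ ?_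
  exact lsub_mono hmono (by omega) (pow_diff_mem hmono hα hm hδ (i + 1))

theorem expNil_sub_one_mem (hmono : Monotone W) {α : Module.End ℂ V}
    (hα : α ∈ LSub W 1) : expNil α - 1 ∈ LSub W 1 := by
  have h := expNil_approx hmono (LSub W 1).zero_mem (le_refl 1) hα
  rw [zero_add, expNil_zero] at h
  have he : expNil α - 1 = (expNil α - 1 - α) + α := by abel
  rw [he]
  exact (LSub W 1).add_mem (lsub_mono hmono (by omega) h) hα

theorem expNil_inj {a b : ℤ} (hmono : Monotone W) (hbot : ∀ k ≤ a, W k = ⊥) (htopb : W b = ⊤)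
    {α β : Module.End ℂ V} (hα : α ∈ LSub W 1) (hβ : β ∈ LSub W 1)
    (h : expNil α = expNil β) : α = β := by
  have key : ∀ j : ℕ, α - β ∈ LSub W (1 + j) := by
    intro j
    induction j with
    | zero => simpa using (LSub W 1).sub_mem hα hβ
    | succ n ih =>
      have h2 := expNil_approx hmono hβ (by omega : 1 ≤ 1 + n) ih
      have hba : β + (α - β) = α := by abel
      rw [hba, h, sub_self, zero_sub] at h2
      have := (LSub W (1 + n + 1)).neg_mem h2
      rwa [neg_neg] at this
  have h1 := key ((b - a).toNat)
  have h2 : α - β = 0 := by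
    refine lsub_eq_zero hbot htopb (M := 1 + (b - a).toNat) ?_ h1
    have := Int.self_le_toNat (b - a)
    push_cast
    omega
  exact sub_eq_zero.mp h2

theorem expNil_surj {a b : ℤ} (hmono : Monotone W) (hbot : ∀ k ≤ a, W k = ⊥) (htopb : W b = ⊤)
    {g : Module.End ℂ V} (hg : g - 1 ∈ LSub W 1) : ∃ α ∈ LSub W 1, expNil α = g := by
  have key : ∀ j : ℕ, ∃ α ∈ LSub W 1, g - expNil α ∈ LSub W (1 + j) := by
    intro j
    induction j with
    | zero =>
      refine ⟨g - 1, hg, ?_⟩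
      have he : g - expNil (g - 1) = (g - 1) - (expNil (g - 1) - 1) := by abel
      rw [he]
      exact (LSub W 1).sub_mem hg (expNil_sub_one_mem hmono hg)
    | succ n ih =>
      obtain ⟨α, hα, hd⟩ := ih
      refine ⟨α + (g - expNil α),
        (LSub W 1).add_mem hα (lsub_mono hmono (by omega) hd), ?_⟩
      have h2 := expNil_approx hmono hα (by omega : 1 ≤ 1 + n) hd
      have he : g - expNil (α + (g - expNil α)) =
          -(expNil (α + (g - expNil α)) - expNil α - (g - expNil α)) := by abel
      rw [he]
      exact (LSub W (1 + n + 1)).neg_mem h2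
  obtain ⟨α, hα, hd⟩ := key ((b - a).toNat)
  refine ⟨α, hα, ?_⟩
  have h2 : g - expNil α = 0 := by
    refine lsub_eq_zero hbot htopb (M := 1 + (b - a).toNat) ?_ hd
    have := Int.self_le_toNat (b - a)
    push_cast
    omega
  exact (sub_eq_zero.mp h2).symm

end Aux

/-! ### Gradings -/

section Grading

variable {V : Type*} [AddCommGroup V] [Module ℂ V]

/-- projection onto `p` along `q` as an endomorphism -/
noncomputable def projOf {p q : Submodule ℂ V} (h : IsCompl p q) : Module.End ℂ V :=
  p.subtype ∘ₗ Submodule.projectionOnto p q h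

theorem projOf_mem {p q : Submodule ℂ V} (h : IsCompl p q) (x : V) : projOf h x ∈ p :=
  (Submodule.projectionOnto p q h x).2

theorem projOf_apply_left {p q : Submodule ℂ V} (h : IsCompl p q) {x : V} (hx : x ∈ p) :
    projOf h x = x := by
  simpa [projOf] using hx

theorem projOf_apply_right {p q : Submodule ℂ V} (h : IsCompl p q) {x : V} (hx : x ∈ q) :
    projOf h x = 0 := by
  simp [projOf, Submodule.projectionOnto_apply_of_mem_right h hx]

variable {W : ℤ → Submodule ℂ V} {Y : Module.End ℂ V}

theorem eig_le_W (hY : IsGrading W Y) (j : ℤ) : Module.End.eigenspace Y (j : ℂ) ≤ W j := by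
  rw [hY j]
  exact le_iSup₂ (f := fun (i : ℤ) (_ : i ≤ j) => Module.End.eigenspace Y (i : ℂ)) j le_rfl

theorem sup_eig_top {b : ℤ} (htopb : W b = ⊤) (hY : IsGrading W Y) :
    ⨆ j : ℤ, Module.End.eigenspace Y (j : ℂ) = ⊤ := by
  rw [eq_top_iff, ← htopb, hY b]
  exact iSup₂_le fun j _ => le_iSup (fun i : ℤ => Module.End.eigenspace Y (i : ℂ)) j

theorem eig_disjoint (Y : Module.End ℂ V) (j : ℤ) :
    Disjoint (Module.End.eigenspace Y (j : ℂ))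
      (⨆ i : ℤ, ⨆ _ : i ≠ j, Module.End.eigenspace Y (i : ℂ)) := by
  have h := (Module.End.eigenspaces_iSupIndep Y).comp
    (f := fun i : ℤ => (i : ℂ)) (fun x y hxy => by simpa using hxy)
  exact h j

theorem eig_isCompl {b : ℤ} (htopb : W b = ⊤) (hY : IsGrading W Y) (j : ℤ) :
    IsCompl (Module.End.eigenspace Y (j : ℂ))
      (⨆ i : ℤ, ⨆ _ : i ≠ j, Module.End.eigenspace Y (i : ℂ)) := by
  constructor
  · exact eig_disjoint Y j
  · rw [codisjoint_iff, eq_top_iff, ← sup_eig_top htopb hY]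
    refine iSup_le fun i => ?_
    by_cases h : i = j
    · subst h; exact le_sup_left
    · exact le_trans (le_iSup₂ (f := fun (l : ℤ) (_ : l ≠ j) =>
        Module.End.eigenspace Y (l : ℂ)) i h) le_sup_right

/-- induction over membership in `W k` for a grading -/
theorem W_induction (hY : IsGrading W Y) {k : ℤ} {x : V} (hx : x ∈ W k)
    {C : V → Prop} (h0 : C 0) (hadd : ∀ u v, C u → C v → C (u + v))
    (heig : ∀ j : ℤ, j ≤ k → ∀ y ∈ Module.End.eigenspace Y (j : ℂ), C y) : C x := by
  rw [hY k] at hx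
  refine Submodule.iSup_induction (motive := C)
    (fun j : ℤ => ⨆ _ : j ≤ k, Module.End.eigenspace Y (j : ℂ)) hx ?_ h0 hadd
  intro j y hy
  by_cases hj : j ≤ k
  · simp only [iSup_pos hj] at hy
    exact heig j hj y hy
  · simp only [iSup_neg hj, Submodule.mem_bot] at hy
    rw [hy]; exact h0

/-- induction over all of `V` for a grading -/
theorem top_induction {b : ℤ} (htopb : W b = ⊤) (hY : IsGrading W Y) (x : V)
    {C : V → Prop} (h0 : C 0) (hadd : ∀ u v, C u → C v → C (u + v))
    (heig : ∀ j : ℤ, ∀ y ∈ Module.End.eigenspace Y (j : ℂ), C y) : C x := by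
  have hx : x ∈ ⨆ j : ℤ, Module.End.eigenspace Y (j : ℂ) := by
    rw [sup_eig_top htopb hY]; trivial
  exact Submodule.iSup_induction (motive := C) _ hx heig h0 hadd

theorem eig_bot_low {a : ℤ} (hbot : ∀ k ≤ a, W k = ⊥) (hY : IsGrading W Y)
    {j : ℤ} (hj : j ≤ a) : Module.End.eigenspace Y (j : ℂ) = ⊥ :=
  le_bot_iff.mp (hbot j hj ▸ eig_le_W hY j)

theorem eig_bot_high {b : ℤ} (htopb : W b = ⊤) (hY : IsGrading W Y)
    {j : ℤ} (hj : b < j) : Module.End.eigenspace Y (j : ℂ) = ⊥ := by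
  refine (eig_disjoint Y j).eq_bot_of_le ?_
  have h1 : Module.End.eigenspace Y (j : ℂ) ≤ W b := htopb ▸ le_top
  rw [hY b] at h1
  refine h1.trans (iSup₂_le fun i hi => ?_)
  exact le_iSup₂ (f := fun (l : ℤ) (_ : l ≠ j) => Module.End.eigenspace Y (l : ℂ))
    i (by omega)

theorem projOf_eig_ne {b : ℤ} (htopb : W b = ⊤) (hY : IsGrading W Y) {i j : ℤ} (hij : i ≠ j)
    {x : V} (hx : x ∈ Module.End.eigenspace Y (i : ℂ)) :
    projOf (eig_isCompl htopb hY j) x = 0 := by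
  refine projOf_apply_right _ ?_
  exact le_iSup₂ (f := fun (l : ℤ) (_ : l ≠ j) => Module.End.eigenspace Y (l : ℂ)) i hij hx

theorem projOf_W_high {b : ℤ} (htopb : W b = ⊤) (hY : IsGrading W Y) {k j : ℤ} (hkj : k < j)
    {x : V} (hx : x ∈ W k) : projOf (eig_isCompl htopb hY j) x = 0 := by
  refine projOf_apply_right _ ?_
  have h : W k ≤ ⨆ i : ℤ, ⨆ _ : i ≠ j, Module.End.eigenspace Y (i : ℂ) := by
    rw [hY k]
    exact iSup₂_le fun i hi => le_iSup₂ (f := fun (l : ℤ) (_ : l ≠ j) =>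
      Module.End.eigenspace Y (l : ℂ)) i (by omega)
  exact h hx

theorem sum_projOf {a b : ℤ} (hbot : ∀ k ≤ a, W k = ⊥) (htopb : W b = ⊤)
    (hY : IsGrading W Y) (x : V) :
    ∑ j ∈ Finset.Icc (a + 1) b, projOf (eig_isCompl htopb hY j) x = x := by
  induction x using top_induction htopb hY with
  | h0 => simp
  | hadd u v hu hv => simp only [map_add, Finset.sum_add_distrib, hu, hv]
  | heig j y hy =>
    by_cases hj : j ∈ Finset.Icc (a + 1) b
    · rw [Finset.sum_eq_single j
        (fun i _ hne => projOf_eig_ne htopb hY (by omega) hy) (fun h => absurd hj h)]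
      exact projOf_apply_left _ hy
    · rw [Finset.mem_Icc, not_and_or, not_le, not_le] at hj
      have hy0 : y = 0 := by
        rcases hj with h | h
        · rw [eig_bot_low hbot hY (show j ≤ a by omega)] at hy
          simpa using hy
        · rw [eig_bot_high htopb hY h] at hy
          simpa using hy
      simp [hy0]

/-- uniqueness of the intertwiner -/
theorem conj_unique {b : ℤ} (htopb : W b = ⊤) {Y' d : Module.End ℂ V}
    (hY : IsGrading W Y) (hY' : IsGrading W Y') (hd : d ∈ LSub W 1)
    (hcomm : d * Y = Y' * d) : d = 0 := by
  ext x
  show d x = (0 : Module.End ℂ V) x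
  rw [LinearMap.zero_apply]
  induction x using top_induction htopb hY with
  | h0 => simp
  | hadd u v hu hv => rw [map_add, hu, hv, add_zero]
  | heig j y hy =>
    have h1 : d y ∈ Module.End.eigenspace Y' (j : ℂ) := by
      rw [Module.End.mem_eigenspace_iff]
      have h := DFunLike.congr_fun hcomm y
      simp only [Module.End.mul_apply] at h
      rw [Module.End.mem_eigenspace_iff.mp hy, map_smul] at h
      exact h.symm
    have h2 : d y ∈ W (j - 1) := by
      have := hd j y (eig_le_W hY j hy)
      simpa using this
    have h3 : d y ∈ ⨆ i : ℤ, ⨆ _ : i ≠ j, Module.End.eigenspace Y' (i : ℂ) := by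
      have hle : W (j - 1) ≤ ⨆ i : ℤ, ⨆ _ : i ≠ j, Module.End.eigenspace Y' (i : ℂ) := by
        rw [hY' (j - 1)]
        exact iSup₂_le fun i hi => le_iSup₂ (f := fun (l : ℤ) (_ : l ≠ j) =>
          Module.End.eigenspace Y' (l : ℂ)) i (by omega)
      exact hle h2
    exact Submodule.disjoint_def.mp (eig_disjoint Y' j) _ h1 h3

/-- eigenspaces of a conjugate -/
theorem conj_eigenspace {u v Z : Module.End ℂ V} (huv : u * v = 1) (hvu : v * u = 1) (μ : ℂ) :
    Module.End.eigenspace (u * Z * v) μ = Submodule.map u (Module.End.eigenspace Z μ) := by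
  have huv' : ∀ z, u (v z) = z := fun z => by
    have := DFunLike.congr_fun huv z; simpa using this
  have hvu' : ∀ z, v (u z) = z := fun z => by
    have := DFunLike.congr_fun hvu z; simpa using this
  ext y
  simp only [Submodule.mem_map, Module.End.mem_eigenspace_iff, Module.End.mul_apply]
  constructor
  · intro hy
    refine ⟨v y, ?_, huv' y⟩
    have h := congrArg v hy
    rw [hvu', map_smul] at h
    exact h
  · rintro ⟨x, hx, rfl⟩
    rw [hvu', hx, map_smul]

end Grading

set_option maxHeartbeats 2000000 in
/-- The group `exp(Lie_{-1})` acts (by conjugation) simply transitively on the set of all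
gradings of a finite increasing filtration `W` of a finite-dimensional vector space. -/
theorem exp_lieNegOne_simply_transitive_on_gradings {V : Type*} [AddCommGroup V] [Module ℂ V]
    [FiniteDimensional ℂ V] (W : ℤ → Submodule ℂ V) (hmono : Monotone W)
    (hbot : ∃ a : ℤ, ∀ k ≤ a, W k = ⊥) (htop : ∃ b : ℤ, ∀ k, b ≤ k → W k = ⊤) :
    -- the action preserves the set of gradings
    (∀ α ∈ LieNegOne W, ∀ Y : Module.End ℂ V, IsGrading W Y →
      IsGrading W (expNil α * Y * expNil (-α))) ∧
    -- simple transitivity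
    (∀ Y Y' : Module.End ℂ V, IsGrading W Y → IsGrading W Y' →
      ∃! α : Module.End ℂ V, α ∈ LieNegOne W ∧ expNil α * Y = Y' * expNil α) := by
  obtain ⟨a, ha⟩ := hbot
  obtain ⟨b, hb⟩ := htop
  have htopb : W b = ⊤ := hb b le_rfl
  constructor
  · -- preservation of gradings
    intro α hα Y hY
    have hα1 : α ∈ LSub W 1 := mem_lieNegOne_iff.mp hα
    have hnα1 : -α ∈ LSub W 1 := (LSub W 1).neg_mem hα1
    set u := expNil α with hu
    set v := expNil (-α) with hv
    have huv : u * v = 1 := expNil_mul_expNil_neg (lsub_pow_eq_zero ha htopb hα1)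
    have hvu : v * u = 1 := by
      have := expNil_mul_expNil_neg (lsub_pow_eq_zero ha htopb hnα1)
      rwa [neg_neg] at this
    have hupres : ∀ k : ℤ, ∀ x ∈ W k, u x ∈ W k := by
      intro k x hx
      have h := expNil_sub_one_mem hmono hα1 k x hx
      have he : u x = x + (expNil α - 1) x := by simp [hu]
      rw [he]
      exact (W k).add_mem hx (hmono (by omega : k - ((1 : ℕ) : ℤ) ≤ k) h)
    have hvpres : ∀ k : ℤ, ∀ x ∈ W k, v x ∈ W k := by
      intro k x hx
      have h := expNil_sub_one_mem hmono hnα1 k x hx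
      have he : v x = x + (expNil (-α) - 1) x := by simp [hv]
      rw [he]
      exact (W k).add_mem hx (hmono (by omega : k - ((1 : ℕ) : ℤ) ≤ k) h)
    have hmapW : ∀ k : ℤ, Submodule.map u (W k) = W k := by
      intro k
      apply le_antisymm
      · rintro _ ⟨x, hx, rfl⟩
        exact hupres k x hx
      · intro x hx
        refine ⟨v x, hvpres k x hx, ?_⟩
        have := DFunLike.congr_fun huv x
        simpa using this
    intro k
    have hmap : (⨆ j : ℤ, ⨆ _ : j ≤ k, Module.End.eigenspace (u * Y * v) (j : ℂ)) =
        Submodule.map u (W k) := by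
      rw [hY k, Submodule.map_iSup]
      refine iSup_congr fun j => ?_
      rw [Submodule.map_iSup]
      exact iSup_congr fun hj => conj_eigenspace huv hvu (j : ℂ)
    rw [hmap, hmapW k]
  · -- simple transitivity
    intro Y Y' hY hY'
    -- construct the intertwiner g
    set P : ℤ → Module.End ℂ V := fun j => projOf (eig_isCompl htopb hY j) with hP
    set P' : ℤ → Module.End ℂ V := fun j => projOf (eig_isCompl htopb hY' j) with hP'
    set g : Module.End ℂ V := ∑ j ∈ Finset.Icc (a + 1) b, P' j * P j with hg
    have hgx : ∀ j ∈ Finset.Icc (a + 1) b, ∀ x ∈ Module.End.eigenspace Y (j : ℂ),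
        g x = P' j x := by
      intro j hj x hx
      rw [hg, LinearMap.sum_apply]
      rw [Finset.sum_eq_single j (fun i _ hne => ?_) (fun h => absurd hj h)]
      · simp only [Module.End.mul_apply, hP]
        rw [projOf_apply_left _ hx]
      · simp only [Module.End.mul_apply, hP]
        rw [projOf_eig_ne htopb hY (Ne.symm hne) hx, map_zero]
    have hgzero : ∀ j : ℤ, j ∉ Finset.Icc (a + 1) b →
        ∀ x ∈ Module.End.eigenspace Y (j : ℂ), x = 0 := by
      intro j hj x hx
      rw [Finset.mem_Icc, not_and_or, not_le, not_le] at hj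
      rcases hj with h | h
      · rw [eig_bot_low ha hY (show j ≤ a by omega)] at hx
        simpa using hx
      · rw [eig_bot_high htopb hY h] at hx
        simpa using hx
    have hgY : g * Y = Y' * g := by
      ext x
      show g (Y x) = Y' (g x)
      induction x using top_induction htopb hY with
      | h0 => simp
      | hadd p q hp hq => simp only [map_add, hp, hq]
      | heig j y hy =>
        by_cases hj : j ∈ Finset.Icc (a + 1) b
        · have h1 : Y y = (j : ℂ) • y := Module.End.mem_eigenspace_iff.mp hy
          rw [h1, map_smul, hgx j hj y hy]
          have h2 : P' j y ∈ Module.End.eigenspace Y' (j : ℂ) := projOf_mem _ y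
          rw [Module.End.mem_eigenspace_iff.mp h2]
        · rw [hgzero j hj y hy]
          simp
    have hg1 : g - 1 ∈ LSub W 1 := by
      intro k x hx
      show (g - 1) x ∈ W (k - ((1 : ℕ) : ℤ))
      have hk1 : (k - ((1 : ℕ) : ℤ)) = k - 1 := by push_cast; ring
      rw [hk1, LinearMap.sub_apply, Module.End.one_apply]
      refine W_induction hY hx (C := fun z => g z - z ∈ W (k - 1)) (by simp) ?_ ?_
      · intro p q hp hq
        have he : g (p + q) - (p + q) = (g p - p) + (g q - q) := by
          rw [map_add]; abel
        rw [he]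
        exact (W (k - 1)).add_mem hp hq
      · intro j hj y hy
        by_cases hjm : j ∈ Finset.Icc (a + 1) b
        · rw [hgx j hjm y hy]
          have hyW : y ∈ W j := eig_le_W hY j hy
          have hsum : ∑ i ∈ Finset.Icc (a + 1) b, P' i y = y := sum_projOf ha htopb hY' y
          have h2 : P' j y + ∑ i ∈ (Finset.Icc (a + 1) b).erase j, P' i y = y := by
            rw [Finset.add_sum_erase _ (fun i => P' i y) hjm]
            exact hsum
          have herase : P' j y - y = -(∑ i ∈ (Finset.Icc (a + 1) b).erase j, P' i y) := by
            rw [eq_neg_iff_add_eq_zero, sub_add_eq_add_sub, h2, sub_self]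
          rw [herase]
          refine (W (k - 1)).neg_mem (Submodule.sum_mem _ fun i hi => ?_)
          rw [Finset.mem_erase] at hi
          rcases lt_or_gt_of_ne hi.1 with hij | hij
          · -- i < j : P' i y ∈ E'_i ≤ W i ≤ W (k-1)
            have := projOf_mem (eig_isCompl htopb hY' i) y
            have hWi : P' i y ∈ W i := eig_le_W hY' i this
            exact hmono (by omega : i ≤ k - 1) hWi
          · -- i > j : P' i y = 0
            rw [show P' i y = 0 from projOf_W_high htopb hY' hij hyW]
            exact (W (k - 1)).zero_mem
        · rw [hgzero j hjm y hy]
          simp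
    -- now pull back through exp
    obtain ⟨α, hα1, hαg⟩ := expNil_surj hmono ha htopb hg1
    refine ⟨α, ⟨mem_lieNegOne_iff.mpr hα1, by rw [hαg]; exact hgY⟩, ?_⟩
    intro β hβ
    obtain ⟨hβmem, hβeq⟩ := hβ
    have hβ1 : β ∈ LSub W 1 := mem_lieNegOne_iff.mp hβmem
    have hd : expNil β - expNil α ∈ LSub W 1 := by
      have h1 := expNil_sub_one_mem hmono hβ1
      have h2 := expNil_sub_one_mem hmono hα1
      have he : expNil β - expNil α = (expNil β - 1) - (expNil α - 1) := by abel
      rw [he]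
      exact (LSub W 1).sub_mem h1 h2
    have hcomm : (expNil β - expNil α) * Y = Y' * (expNil β - expNil α) := by
      rw [sub_mul, mul_sub, hβeq, hαg, hgY]
    have hzero := conj_unique htopb hY hY' hd hcomm
    have heq : expNil β = expNil α := sub_eq_zero.mp hzero
    exact expNil_inj hmono ha htopb hβ1 hα1 heq
end

section
/- Let the induced grading decomposition of End(V) associated to a mixed Hodge structure (F, W) be End(V) = η₊ ⊕ η₀ ⊕ η₋ ⊕ Λ, where η₊ = ⊕_{r≥0, s<0} gl(V)^{r,s}, η₀ = gl(V)^{0,0}, η₋ = ⊕_{r<0, s≥0} gl(V)^{r,s}, Λ = ⊕_{r,s<0} gl(V)^{r,s}. Then complex conjugation satisfies: conj(η₊) ⊆ η₋ ⊕ Λ, conj(η₀) ⊆ η₀ ⊕ Λ, conj(η₋) ⊆ η₊ ⊕ Λ, and conj(Λ) = Λ. -/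
section
variable {V : Type*} [AddCommGroup V] [Module ℂ V]

/-- A real structure (complex conjugation) on `V`. -/
def IsRealStructure (σ : V → V) : Prop :=
  (∀ x y, σ (x + y) = σ x + σ y) ∧
  (∀ (c : ℂ) (x : V), σ (c • x) = (starRingEnd ℂ) c • σ x) ∧
  (∀ x, σ (σ x) = x)

/-- `I` is a bigrading of `V`. -/
def IsBigrading (I : ℤ → ℤ → Submodule ℂ V) : Prop :=
  iSupIndep (fun pq : ℤ × ℤ => I pq.1 pq.2) ∧ (⨆ pq : ℤ × ℤ, I pq.1 pq.2) = ⊤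

/-- Deligne's conjugation condition for a bigrading. -/
def ConjRel (σ : V → V) (I : ℤ → ℤ → Submodule ℂ V) : Prop :=
  ∀ p q : ℤ, ∀ v ∈ I p q,
    σ v ∈ I q p ⊔ (⨆ r : ℤ, ⨆ _ : r < q, ⨆ s : ℤ, ⨆ _ : s < p, I r s)

/-- `η₊ = ⊕_{r ≥ 0, s < 0} gl(V)^{r,s}`. -/
def EtaPlus (I : ℤ → ℤ → Submodule ℂ V) : Set (Module.End ℂ V) :=
  {α | ∀ p q : ℤ, ∀ v ∈ I p q,
    α v ∈ ⨆ a : ℤ, ⨆ _ : p ≤ a, ⨆ b : ℤ, ⨆ _ : b < q, I a b}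

/-- `η₀ = gl(V)^{0,0}`. -/
def EtaZero (I : ℤ → ℤ → Submodule ℂ V) : Set (Module.End ℂ V) :=
  {α | ∀ p q : ℤ, ∀ v ∈ I p q, α v ∈ I p q}

/-- `η₋ = ⊕_{r < 0, s ≥ 0} gl(V)^{r,s}`. -/
def EtaMinus (I : ℤ → ℤ → Submodule ℂ V) : Set (Module.End ℂ V) :=
  {α | ∀ p q : ℤ, ∀ v ∈ I p q,
    α v ∈ ⨆ a : ℤ, ⨆ _ : a < p, ⨆ b : ℤ, ⨆ _ : q ≤ b, I a b}

/-- `Λ = ⊕_{r < 0, s < 0} gl(V)^{r,s}`. -/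
def LambdaSet (I : ℤ → ℤ → Submodule ℂ V) : Set (Module.End ℂ V) :=
  {α | ∀ p q : ℤ, ∀ v ∈ I p q,
    α v ∈ ⨆ r : ℤ, ⨆ _ : r < p, ⨆ s : ℤ, ⨆ _ : s < q, I r s}

end

section Aux
variable {V : Type*} [AddCommGroup V] [Module ℂ V]

/-- The preimage of a submodule under a real structure is a submodule (conjugate linearity). -/
private def sigmaPre (σ : V → V) (hσ : IsRealStructure σ) (T : Submodule ℂ V) :
    Submodule ℂ V where
  carrier := σ ⁻¹' (T : Set V)
  add_mem' := fun {x y} hx hy => by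
    simp only [Set.mem_preimage, SetLike.mem_coe] at *
    rw [hσ.1]; exact T.add_mem hx hy
  zero_mem' := by
    have h0 : σ 0 = 0 := by
      have := hσ.2.1 0 0
      simpa using this
    simp [h0]
  smul_mem' := fun c x hx => by
    simp only [Set.mem_preimage, SetLike.mem_coe] at *
    rw [hσ.2.1]; exact T.smul_mem _ hx

private lemma Ile4 (I : ℤ → ℤ → Submodule ℂ V) {P Q : ℤ → Prop} {a b : ℤ}
    (ha : P a) (hb : Q b) : I a b ≤ ⨆ r, ⨆ _ : P r, ⨆ s, ⨆ _ : Q s, I r s :=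
  le_iSup_of_le a (le_iSup_of_le ha (le_iSup_of_le b (le_iSup_of_le hb le_rfl)))

private lemma Ile3a (I : ℤ → ℤ → Submodule ℂ V) {P : ℤ → Prop} {a b : ℤ}
    (ha : P a) : I a b ≤ ⨆ r, ⨆ _ : P r, ⨆ s, I r s :=
  le_iSup_of_le a (le_iSup_of_le ha (le_iSup_of_le b le_rfl))

private lemma Ile3b (I : ℤ → ℤ → Submodule ℂ V) {Q : ℤ → Prop} {a b : ℤ}
    (hb : Q b) : I a b ≤ ⨆ r, ⨆ s, ⨆ _ : Q s, I r s :=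
  le_iSup_of_le a (le_iSup_of_le b (le_iSup_of_le hb le_rfl))

private lemma le_sigmaPre_of {σ : V → V} (hσ : IsRealStructure σ)
    {I : ℤ → ℤ → Submodule ℂ V} (hc : ConjRel σ I) {T : Submodule ℂ V} {a b : ℤ}
    (h1 : I b a ≤ T)
    (h2 : ∀ r, r < b → ∀ s, s < a → I r s ≤ T) :
    I a b ≤ sigmaPre σ hσ T := fun x hx =>
  (sup_le h1 (iSup_le fun r => iSup_le fun hr => iSup_le fun s => iSup_le fun hs =>
    h2 r hr s hs)) (hc a b x hx)

private lemma lambda_conj {σ : V → V} (hσ : IsRealStructure σ)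
    {I : ℤ → ℤ → Submodule ℂ V} (hc : ConjRel σ I)
    {α β : Module.End ℂ V} (hβ : ∀ v, β v = σ (α (σ v)))
    (hα : α ∈ LambdaSet I) : β ∈ LambdaSet I := by
  intro p q v hv
  rw [hβ]
  set D : Submodule ℂ V := ⨆ a, ⨆ _ : a < q, ⨆ b, ⨆ _ : b < p, I a b with hD
  have hstep : α (σ v) ∈ D := by
    have hC : (I q p ⊔ (⨆ r, ⨆ _ : r < q, ⨆ s, ⨆ _ : s < p, I r s)) ≤ D.comap α := by
      refine sup_le (fun x hx => Submodule.mem_comap.mpr (hα q p x hx))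
        (iSup_le fun r => iSup_le fun hr => iSup_le fun s => iSup_le fun hs => fun x hx =>
          Submodule.mem_comap.mpr ?_)
      exact (iSup_le fun a => iSup_le fun ha => iSup_le fun b => iSup_le fun hb =>
        Ile4 I (ha.trans hr) (hb.trans hs)) (hα r s x hx)
    exact hC (hc p q v hv)
  have hDle : D ≤ sigmaPre σ hσ (⨆ r, ⨆ _ : r < p, ⨆ s, ⨆ _ : s < q, I r s) := by
    refine iSup_le fun a => iSup_le fun ha => iSup_le fun b => iSup_le fun hb => ?_
    exact le_sigmaPre_of hσ hc (Ile4 I hb ha)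
      (fun r hr s hs => Ile4 I (hr.trans hb) (hs.trans ha))
  exact hDle hstep

end Aux

set_option maxHeartbeats 1000000 in
/-- For the decomposition `End(V) = η₊ ⊕ η₀ ⊕ η₋ ⊕ Λ` associated to a mixed Hodge structure,
complex conjugation satisfies `conj(η₊) ⊆ η₋ ⊕ Λ`, `conj(η₀) ⊆ η₀ ⊕ Λ`, `conj(η₋) ⊆ η₊ ⊕ Λ`
and `conj(Λ) = Λ`.  Here `η₋ ⊕ Λ` consists of the endomorphisms sending `I^{p,q}` into
`⊕_{a<p,b} I^{a,b}`, `η₀ ⊕ Λ` of those sending it into `I^{p,q} + ⊕_{a<p,b<q} I^{a,b}`, and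
`η₊ ⊕ Λ` of those sending it into `⊕_{a, b<q} I^{a,b}`. -/
theorem conjugation_of_eta_decomposition {V : Type*} [AddCommGroup V] [Module ℂ V]
    [FiniteDimensional ℂ V] (σ : V → V) (hσ : IsRealStructure σ)
    (I : ℤ → ℤ → Submodule ℂ V) (hI : IsBigrading I) (hc : ConjRel σ I)
    (α β : Module.End ℂ V) (hβ : ∀ v, β v = σ (α (σ v))) :
    -- conj(η₊) ⊆ η₋ ⊕ Λ
    (α ∈ EtaPlus I → ∀ p q : ℤ, ∀ v ∈ I p q,
      β v ∈ ⨆ a : ℤ, ⨆ _ : a < p, ⨆ b : ℤ, I a b) ∧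
    -- conj(η₀) ⊆ η₀ ⊕ Λ
    (α ∈ EtaZero I → ∀ p q : ℤ, ∀ v ∈ I p q,
      β v ∈ I p q ⊔ (⨆ a : ℤ, ⨆ _ : a < p, ⨆ b : ℤ, ⨆ _ : b < q, I a b)) ∧
    -- conj(η₋) ⊆ η₊ ⊕ Λ
    (α ∈ EtaMinus I → ∀ p q : ℤ, ∀ v ∈ I p q,
      β v ∈ ⨆ a : ℤ, ⨆ b : ℤ, ⨆ _ : b < q, I a b) ∧
    -- conj(Λ) = Λ
    (α ∈ LambdaSet I ↔ β ∈ LambdaSet I) := by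
  refine ⟨?_, ?_, ?_, ?_⟩
  · -- conj(η₊) ⊆ η₋ ⊕ Λ
    intro hα p q v hv
    rw [hβ v]
    set D : Submodule ℂ V := ⨆ a, ⨆ b, ⨆ _ : b < p, I a b with hD
    have hstep : α (σ v) ∈ D := by
      have hC : (I q p ⊔ (⨆ r, ⨆ _ : r < q, ⨆ s, ⨆ _ : s < p, I r s)) ≤ D.comap α := by
        refine sup_le (fun x hx => Submodule.mem_comap.mpr ?_)
          (iSup_le fun r => iSup_le fun hr => iSup_le fun s => iSup_le fun hs => fun x hx =>
            Submodule.mem_comap.mpr ?_)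
        · exact (iSup_le fun a => iSup_le fun _ => iSup_le fun b => iSup_le fun hb =>
            Ile3b I hb) (hα q p x hx)
        · exact (iSup_le fun a => iSup_le fun _ => iSup_le fun b => iSup_le fun hb =>
            Ile3b I (hb.trans hs)) (hα r s x hx)
      exact hC (hc p q v hv)
    have hDle : D ≤ sigmaPre σ hσ (⨆ a, ⨆ _ : a < p, ⨆ b, I a b) := by
      refine iSup_le fun a => iSup_le fun b => iSup_le fun hb => ?_
      exact le_sigmaPre_of hσ hc (Ile3a I hb) (fun r hr s _ => Ile3a I (hr.trans hb))
    exact hDle hstep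
  · -- conj(η₀) ⊆ η₀ ⊕ Λ
    intro hα p q v hv
    rw [hβ v]
    set C : Submodule ℂ V := I q p ⊔ (⨆ r, ⨆ _ : r < q, ⨆ s, ⨆ _ : s < p, I r s) with hC
    have hstep : α (σ v) ∈ C := by
      have hCC : C ≤ C.comap α := by
        refine sup_le (fun x hx => Submodule.mem_comap.mpr
            (Submodule.mem_sup_left (hα q p x hx)))
          (iSup_le fun r => iSup_le fun hr => iSup_le fun s => iSup_le fun hs => fun x hx =>
            Submodule.mem_comap.mpr (Submodule.mem_sup_right
              (Ile4 (P:=fun t => t < q) (Q:=fun t => t < p) I hr hs (hα r s x hx))))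
      exact hCC (hc p q v hv)
    have hCle : C ≤ sigmaPre σ hσ
        (I p q ⊔ (⨆ a, ⨆ _ : a < p, ⨆ b, ⨆ _ : b < q, I a b)) := by
      refine sup_le ?_ (iSup_le fun r => iSup_le fun hr => iSup_le fun s =>
        iSup_le fun hs => ?_)
      · exact le_sigmaPre_of hσ hc le_sup_left
          (fun r hr s hs => (Ile4 (P:=fun t => t < p) (Q:=fun t => t < q) I hr hs).trans le_sup_right)
      · exact le_sigmaPre_of hσ hc ((Ile4 (P:=fun t => t < p) (Q:=fun t => t < q) I hs hr).trans le_sup_right)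
          (fun c hcs d hdr => (Ile4 (P:=fun t => t < p) (Q:=fun t => t < q) I (hcs.trans hs) (hdr.trans hr)).trans le_sup_right)
    exact hCle hstep
  · -- conj(η₋) ⊆ η₊ ⊕ Λ
    intro hα p q v hv
    rw [hβ v]
    set D : Submodule ℂ V := ⨆ a, ⨆ _ : a < q, ⨆ b, I a b with hD
    have hstep : α (σ v) ∈ D := by
      have hC : (I q p ⊔ (⨆ r, ⨆ _ : r < q, ⨆ s, ⨆ _ : s < p, I r s)) ≤ D.comap α := by
        refine sup_le (fun x hx => Submodule.mem_comap.mpr ?_)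
          (iSup_le fun r => iSup_le fun hr => iSup_le fun s => iSup_le fun hs => fun x hx =>
            Submodule.mem_comap.mpr ?_)
        · exact (iSup_le fun a => iSup_le fun ha => iSup_le fun b => iSup_le fun _ =>
            Ile3a I ha) (hα q p x hx)
        · exact (iSup_le fun a => iSup_le fun ha => iSup_le fun b => iSup_le fun _ =>
            Ile3a I (ha.trans hr)) (hα r s x hx)
      exact hC (hc p q v hv)
    have hDle : D ≤ sigmaPre σ hσ (⨆ a, ⨆ b, ⨆ _ : b < q, I a b) := by
      refine iSup_le fun a => iSup_le fun ha => iSup_le fun b => ?_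
      exact le_sigmaPre_of hσ hc (Ile3b I ha) (fun r _ s hs => Ile3b I (hs.trans ha))
    exact hDle hstep
  · -- conj(Λ) = Λ
    have hα' : ∀ v, α v = σ (β (σ v)) := fun v => by
      rw [hβ (σ v), hσ.2.2, hσ.2.2]
    exact ⟨fun h => lambda_conj hσ hc hβ h, fun h => lambda_conj hσ hc hα' h⟩
end

section
/- Let N₀ be a nilpotent lowering operator of an sl₂-triple (N₀, Y₀, N₀⁺) acting on a finite-dimensional space, and let v be a vector with Y₀ v = a v (a weight vector for Y₀). If v is a highest-weight vector of weight a, then the component of (sin(ad N₀)/ad N₀)(v) in the top Z-eigenspace E^Z_a is nonzero, where Z corresponds to i(n₋ − n₊) under the representation. -/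
open Module Polynomial Finset LieModule

section Aux

variable {V : Type*} [AddCommGroup V] [Module ℂ V] [FiniteDimensional ℂ V]

/-- The basic complex identity behind the recursion for the top `Z`-eigen functional. -/
private lemma aux_recursion (m k : ℕ) (F : ℕ → ℂ)
    (hF1 : F (k + 1) = F k * ((m : ℂ) - k))
    (hF2 : F (k + 2) = F (k + 1) * ((m : ℂ) - (k + 1))) :
    Complex.I * ((-Complex.I) ^ (k + 2) * F (k + 2)) -
      Complex.I * (((k : ℂ) + 1) * ((m : ℂ) - k)) * ((-Complex.I) ^ k * F k) =
      (m : ℂ) * ((-Complex.I) ^ (k + 1) * F (k + 1)) := by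
  have h2 : (-Complex.I) ^ (k + 2) = -((-Complex.I) ^ k) := by
    rw [pow_add]
    simp [pow_two, Complex.I_mul_I]
  have h1 : (-Complex.I) ^ (k + 1) = (-Complex.I) ^ k * (-Complex.I) := pow_succ _ _
  rw [hF2, hF1, h2, h1]
  ring

end Aux

/-- For a finite-dimensional representation of `sl₂(ℂ)` with `Y₀ = ρ(h)`, raising operator
`N₀⁺ = ρ(n₊)`, lowering operator `N₀ = ρ(n₋)` and `Z = ρ(i(n₋ − n₊)) = i(N₀ − N₀⁺)`:
if `v` is a highest-weight vector of weight `a` (i.e. `Y₀ v = a v`, `N₀⁺ v = 0`, `v ≠ 0`), then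
the component of `(sin N₀ / N₀)(v)` in the top `Z`-eigenspace `E^Z_a` is nonzero
(expressed as: `(sin N₀ / N₀)(v)` does not lie in the sum of the `Z`-eigenspaces `E^Z_c`, `c ≠ a`). -/
theorem sinc_highest_weight_top_component_ne_zero {V : Type*} [AddCommGroup V] [Module ℂ V]
    [FiniteDimensional ℂ V]
    (Y₀ Np N₀ : Module.End ℂ V)
    (hYE : ⁅Y₀, Np⁆ = (2 : ℂ) • Np)
    (hYN : ⁅Y₀, N₀⁆ = -((2 : ℂ) • N₀))
    (hEN : ⁅Np, N₀⁆ = Y₀)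
    (Z : Module.End ℂ V) (hZ : Z = Complex.I • (N₀ - Np))
    (T : Module.End ℂ V)
    (hT : T = ∑ n ∈ Finset.range (Module.finrank ℂ V + 1),
      (((-1 : ℂ) ^ n) / (((2 * n + 1).factorial : ℂ))) • N₀ ^ (2 * n))
    (a : ℤ) (v : V) (hv : Y₀ v = (a : ℂ) • v) (hhw : Np v = 0) (hv0 : v ≠ 0) :
    T v ∉ ⨆ c : ℤ, ⨆ _ : c ≠ a, Module.End.eigenspace Z (c : ℂ) := by
  classical
  by_cases hY0 : Y₀ = 0
  · -- degenerate case: everything is zero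
    have hNp : Np = 0 := by
      have h := hYE
      rw [hY0, Ring.lie_def, zero_mul, mul_zero, sub_zero] at h
      have := h.symm
      rwa [smul_eq_zero_iff_right (by norm_num : (2:ℂ) ≠ 0)] at this
    have hN0 : N₀ = 0 := by
      have h := hYN
      rw [hY0, Ring.lie_def, zero_mul, mul_zero, sub_zero, eq_comm, neg_eq_zero,
        smul_eq_zero_iff_right (by norm_num : (2:ℂ) ≠ 0)] at h
      exact h
    have ha : a = 0 := by
      have h : (a : ℂ) • v = 0 := by rw [← hv, hY0]; rfl
      rcases smul_eq_zero.mp h with h | h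
      · exact_mod_cast h
      · exact absurd h hv0
    subst ha
    have hZ0 : Z = 0 := by rw [hZ, hNp, hN0]; simp
    have hTv : T v = v := by
      rw [hT, LinearMap.sum_apply]
      rw [Finset.sum_eq_single 0]
      · simp
      · intro n _ hn
        rw [hN0, LinearMap.smul_apply]
        rw [zero_pow (by omega : 2 * n ≠ 0)]
        simp
      · intro h; exact absurd (Finset.mem_range.mpr (by omega)) h
    rw [hTv]
    intro hmem
    have hbot : (⨆ c : ℤ, ⨆ _ : c ≠ (0:ℤ), Module.End.eigenspace Z (c : ℂ)) = ⊥ := by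
      rw [eq_bot_iff]
      refine iSup_le fun c => iSup_le fun hc => ?_
      intro x hx
      rw [Module.End.mem_eigenspace_iff, hZ0] at hx
      have : (c : ℂ) • x = 0 := by rw [← hx]; rfl
      rcases smul_eq_zero.mp this with h | h
      · exact absurd (by exact_mod_cast h) hc
      · simpa [h] using Submodule.zero_mem _
    rw [hbot] at hmem
    exact hv0 (Submodule.mem_bot ℂ |>.mp hmem)
  · -- main case
    letI := LieRing.ofAssociativeRing (A := Module.End ℂ V)
    have t : IsSl2Triple Y₀ Np N₀ :=
      { h_ne_zero := hY0
        lie_e_f := hEN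
        lie_h_e_nsmul := by rw [hYE]; module
        lie_h_f_nsmul := by rw [hYN]; module }
    have P : t.HasPrimitiveVectorWith v ((a : ℤ) : ℂ) :=
      { ne_zero := hv0
        lie_h := by simpa using hv
        lie_e := by simpa using hhw }
    obtain ⟨m, hm⟩ := P.exists_nat
    have htoEnd : LieModule.toEnd ℂ (Module.End ℂ V) V N₀ = N₀ := by
      ext x; simp
    -- the chain of vectors
    set w : ℕ → V := fun k => (N₀ ^ k) v with hw
    have hwP : ∀ k, (LieModule.toEnd ℂ (Module.End ℂ V) V N₀ ^ k) v = w k := by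
      intro k; rw [htoEnd]
    have hwe : ∀ k : ℕ, Np (w (k + 1)) = (((k : ℂ) + 1) * ((m : ℂ) - k)) • w k := by
      intro k
      have h := P.lie_e_pow_succ_toEnd_f k
      rw [hwP, hwP, hm] at h
      simpa using h
    have hwh : ∀ k : ℕ, Y₀ (w k) = ((m : ℂ) - 2 * k) • w k := by
      intro k
      have h := P.lie_h_pow_toEnd_f k
      rw [hwP, hm] at h
      simpa using h
    have hwtop : w (m + 1) = 0 := by
      have h := P.pow_toEnd_f_eq_zero_of_eq_nat hm
      rwa [hwP] at h
    have hwne : ∀ k ≤ m, w k ≠ 0 := by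
      intro k hk
      have h := P.pow_toEnd_f_ne_zero_of_eq_nat hm hk
      rwa [hwP] at h
    have hwzero : ∀ j, m + 1 ≤ j → w j = 0 := by
      intro j hj
      have hj' : j - (m + 1) + (m + 1) = j := by omega
      calc w j = (N₀ ^ (j - (m + 1) + (m + 1))) v := by rw [hj']
        _ = (N₀ ^ (j - (m + 1))) (w (m + 1)) := by rw [pow_add, Module.End.mul_apply]
        _ = 0 := by rw [hwtop, map_zero]
    -- linear independence
    have li : LinearIndependent ℂ (fun k : Fin (m + 1) => w k) := by
      apply Y₀.eigenvectors_linearIndependent' (fun k : Fin (m + 1) => (m : ℂ) - 2 * k)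
      · intro k l hkl
        have : ((k : ℕ) : ℂ) = ((l : ℕ) : ℂ) := by
          linear_combination (-(1:ℂ)/2) * hkl
        have : (k : ℕ) = (l : ℕ) := by exact_mod_cast this
        exact Fin.ext this
      · intro k
        exact ⟨Module.End.mem_eigenspace_iff.mpr (hwh k), hwne k (by omega)⟩
    set S : Submodule ℂ V := Submodule.span ℂ (Set.range fun k : Fin (m + 1) => w k) with hS
    have hwS : ∀ k : ℕ, w k ∈ S := by
      intro k
      by_cases hk : k ≤ m
      · exact Submodule.subset_span ⟨⟨k, by omega⟩, rfl⟩
      · rw [hwzero k (by omega)]; exact S.zero_mem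
    -- the functional
    set F : ℕ → ℂ := fun k => ∏ j ∈ Finset.range k, ((m : ℂ) - j) with hF
    set c : ℕ → ℂ := fun k => (-Complex.I) ^ k * F k with hc
    have hczero : ∀ k, m + 1 ≤ k → c k = 0 := by
      intro k hk
      have : F k = 0 :=
        Finset.prod_eq_zero (Finset.mem_range.mpr (by omega : m < k)) (by simp)
      rw [hc]; simp only []; rw [this, mul_zero]
    let b : Basis (Fin (m + 1)) ℂ S := Basis.span li
    obtain ⟨φ, hφ⟩ := LinearMap.exists_extend ((b.constr ℂ) fun k : Fin (m + 1) => c k)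
    have hφw : ∀ k : ℕ, φ (w k) = c k := by
      intro k
      by_cases hk : k ≤ m
      · have hb : (S.subtype) (b ⟨k, by omega⟩) = w k := congrArg Subtype.val (Basis.span_apply li _)
        calc φ (w k) = (φ ∘ₗ S.subtype) (b ⟨k, by omega⟩) := by rw [LinearMap.comp_apply, hb]
          _ = c k := by rw [hφ, Basis.constr_basis]
      · rw [hwzero k (by omega), map_zero, hczero k (by omega)]
    -- action of Z on the chain
    have hZw : ∀ k : ℕ, Z (w k) ∈ S ∧ φ (Z (w k)) = (m : ℂ) * φ (w k) := by
      intro k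
      have hNw : N₀ (w k) = w (k + 1) := by
        rw [hw]; simp only []
        rw [← Module.End.mul_apply, ← pow_succ']
      match k with
      | 0 =>
        have h0 : Np (w 0) = 0 := by
          have : w 0 = v := by rw [hw]; simp
          rw [this, hhw]
        have hZ0 : Z (w 0) = Complex.I • w 1 := by
          rw [hZ]; simp [h0, hNw]
        constructor
        · rw [hZ0]; exact S.smul_mem _ (hwS 1)
        · rw [hZ0, map_smul, hφw, hφw]
          simp only [hc, hF, pow_one, pow_zero, one_mul, Finset.prod_range_one,
            Finset.prod_range_zero, Nat.cast_zero, sub_zero, mul_one, smul_eq_mul]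
          linear_combination (-(m : ℂ)) * Complex.I_mul_I
      | (k + 1) =>
        have hZk : Z (w (k + 1)) = Complex.I • w (k + 2) -
            (Complex.I * (((k : ℂ) + 1) * ((m : ℂ) - k))) • w k := by
          rw [hZ, LinearMap.smul_apply, LinearMap.sub_apply, hNw, hwe k, smul_sub, smul_smul]
        constructor
        · rw [hZk]
          exact S.sub_mem (S.smul_mem _ (hwS (k + 2))) (S.smul_mem _ (hwS k))
        · rw [hZk, map_sub, map_smul, map_smul, hφw, hφw, hφw]
          have hF1 : F (k + 1) = F k * ((m : ℂ) - k) := Finset.prod_range_succ _ _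
          have hF2 : F (k + 2) = F (k + 1) * ((m : ℂ) - (k + 1)) := by
            have := Finset.prod_range_succ (fun j => ((m : ℂ) - j)) (k + 1)
            simpa using this
          have hrec := aux_recursion m k F hF1 hF2
          simp only [hc, smul_eq_mul]
          linear_combination hrec
    -- Z preserves S with eigen-functional relation
    have hSstep : ∀ x ∈ S, Z x ∈ S ∧ φ (Z x) = (m : ℂ) * φ x := by
      intro x hx
      induction hx using Submodule.span_induction with
      | mem y hy =>
        obtain ⟨k, rfl⟩ := hy
        exact hZw k
      | zero => simp
      | add y z _ _ hy hz =>
        exact ⟨by rw [map_add]; exact S.add_mem hy.1 hz.1,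
          by simp only [map_add, hy.2, hz.2]; ring⟩
      | smul r y _ hy =>
        exact ⟨by rw [map_smul]; exact S.smul_mem _ hy.1,
          by simp only [map_smul, hy.2, smul_eq_mul]; ring⟩
    have hSpow : ∀ n : ℕ, ∀ x ∈ S, (Z ^ n) x ∈ S ∧ φ ((Z ^ n) x) = (m : ℂ) ^ n * φ x := by
      intro n
      induction n with
      | zero => intro x hx; simp [hx]
      | succ n ih =>
        intro x hx
        obtain ⟨h1, h2⟩ := ih x hx
        obtain ⟨h3, h4⟩ := hSstep _ h1
        refine ⟨?_, ?_⟩ <;> rw [pow_succ', Module.End.mul_apply]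
        · exact h3
        · rw [h4, h2, pow_succ]; ring
    -- polynomial evaluation lemma
    have hSq : ∀ q : ℂ[X], ∀ x ∈ S, (aeval Z q) x ∈ S ∧
        φ ((aeval Z q) x) = q.eval ((m : ℕ) : ℂ) * φ x := by
      intro q
      induction q using Polynomial.induction_on' with
      | add p q hp hq =>
        intro x hx
        obtain ⟨h1, h2⟩ := hp x hx
        obtain ⟨h3, h4⟩ := hq x hx
        rw [map_add, LinearMap.add_apply]
        exact ⟨S.add_mem h1 h3, by rw [map_add, h2, h4, eval_add]; ring⟩
      | monomial n bb =>
        intro x hx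
        obtain ⟨h1, h2⟩ := hSpow n x hx
        have he : (aeval Z (monomial n bb)) x = bb • ((Z ^ n) x) := by
          rw [aeval_monomial, Module.End.mul_apply, Module.algebraMap_end_apply]
        rw [he]
        refine ⟨S.smul_mem _ h1, ?_⟩
        rw [map_smul, h2, eval_monomial, smul_eq_mul]
        ring
    -- value of φ on T v
    have hTv : T v = ∑ n ∈ Finset.range (Module.finrank ℂ V + 1),
        (((-1 : ℂ) ^ n) / (((2 * n + 1).factorial : ℂ))) • w (2 * n) := by
      rw [hT, LinearMap.sum_apply]
      exact Finset.sum_congr rfl fun n _ => by rw [LinearMap.smul_apply]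
    have hTvS : T v ∈ S := by
      rw [hTv]
      exact Submodule.sum_mem _ fun n _ => S.smul_mem _ (hwS (2 * n))
    have hφTv : φ (T v) = ∑ n ∈ Finset.range (Module.finrank ℂ V + 1),
        F (2 * n) / (((2 * n + 1).factorial : ℂ)) := by
      rw [hTv, map_sum]
      refine Finset.sum_congr rfl fun n _ => ?_
      rw [map_smul, hφw, smul_eq_mul, hc]
      simp only []
      have hI : (-Complex.I) ^ (2 * n) = (-1 : ℂ) ^ n := by
        rw [pow_mul, show (-Complex.I) ^ 2 = (-1 : ℂ) by
          rw [pow_two, neg_mul_neg, Complex.I_mul_I]]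
      rw [hI]
      rw [div_mul_eq_mul_div, ← mul_assoc, ← mul_pow]
      norm_num
    -- positivity
    set r : ℕ → ℝ := fun n => (∏ j ∈ Finset.range (2 * n), ((m : ℝ) - j)) /
      ((2 * n + 1).factorial : ℝ) with hr
    have hFr : ∀ n, F (2 * n) / (((2 * n + 1).factorial : ℂ)) = ((r n : ℝ) : ℂ) := by
      intro n
      rw [hr, hF]
      push_cast
      rfl
    have hrnn : ∀ n, 0 ≤ r n := by
      intro n
      rw [hr]
      apply div_nonneg _ (by positivity)
      by_cases h : 2 * n ≤ m
      · exact Finset.prod_nonneg fun j hj => by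
          have : (j : ℝ) < (m : ℝ) := by
            have := Finset.mem_range.mp hj
            exact_mod_cast (by omega : j < m)
          linarith
      · rw [Finset.prod_eq_zero (Finset.mem_range.mpr (by omega : m < 2 * n)) (by simp)]
    have hr0 : r 0 = 1 := by rw [hr]; norm_num
    have hφTvne : φ (T v) ≠ 0 := by
      rw [hφTv]
      have : φ (T v) = φ (T v) := rfl
      rw [show (∑ n ∈ Finset.range (Module.finrank ℂ V + 1),
          F (2 * n) / (((2 * n + 1).factorial : ℂ))) =
          (((∑ n ∈ Finset.range (Module.finrank ℂ V + 1), r n : ℝ)) : ℂ) by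
        rw [Complex.ofReal_sum]
        exact Finset.sum_congr rfl fun n _ => hFr n]
      rw [Ne, Complex.ofReal_eq_zero]
      have h1le : (1 : ℝ) ≤ ∑ n ∈ Finset.range (Module.finrank ℂ V + 1), r n := by
        rw [← hr0]
        exact Finset.single_le_sum (fun n _ => hrnn n)
          (Finset.mem_range.mpr (by omega))
      linarith
    -- final contradiction
    intro H
    rw [Submodule.mem_iSup_iff_exists_finsupp] at H
    obtain ⟨d, hd, hdsum⟩ := H
    have hdc : ∀ i ∈ d.support, i ≠ a ∧ Z (d i) = ((i : ℤ) : ℂ) • d i := by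
      intro i hi
      have hne := Finsupp.mem_support_iff.mp hi
      by_cases h : i = a
      · exfalso
        subst h
        have h2 := hd i
        rw [iSup_neg (by simp)] at h2
        exact hne ((Submodule.mem_bot ℂ).mp h2)
      · refine ⟨h, ?_⟩
        have := hd i
        rw [iSup_pos h] at this
        exact Module.End.mem_eigenspace_iff.mp this
    set Q : ℂ[X] := ∏ i ∈ d.support, (X - Polynomial.C ((i : ℤ) : ℂ)) with hQ
    have hQ0 : (aeval Z Q) (T v) = 0 := by
      rw [← hdsum, Finsupp.sum, map_sum]
      refine Finset.sum_eq_zero fun i hi => ?_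
      have hfac : (∏ j ∈ d.support.erase i, (X - Polynomial.C ((j : ℤ) : ℂ))) *
          (X - Polynomial.C ((i : ℤ) : ℂ)) = Q := Finset.prod_erase_mul _ _ hi
      rw [← hfac, map_mul, Module.End.mul_apply]
      have : (aeval Z (X - Polynomial.C ((i : ℤ) : ℂ))) (d i) = 0 := by
        rw [map_sub, aeval_X, aeval_C, LinearMap.sub_apply,
          Module.algebraMap_end_apply, (hdc i hi).2, sub_self]
      rw [this, map_zero]
    have hQeval : Q.eval ((m : ℕ) : ℂ) ≠ 0 := by
      rw [hQ, eval_prod]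
      rw [Finset.prod_ne_zero_iff]
      intro i hi
      rw [eval_sub, eval_X, eval_C, sub_ne_zero]
      intro hcontra
      apply (hdc i hi).1
      have h2 : ((i : ℤ) : ℂ) = ((a : ℤ) : ℂ) := by rw [← hcontra]; exact hm.symm
      exact_mod_cast h2
    have := (hSq Q (T v) hTvS).2
    rw [hQ0, map_zero] at this
    exact hQeval (by
      rcases mul_eq_zero.mp this.symm with h | h
      · exact h
      · exact absurd h hφTvne)
end
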